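/- For all i, j ∈ {1,…,N}, the (i,j) entry of the total L-operator satisfies Σ_{ρ=1}^{ℓ} a_i^ρ c_j^ρ = L_{ij} (q_j^ℓ − q_i^0); equivalently, L_{ij} = −(Σ_{ρ=1}^{ℓ} a_i^ρ c_j^ρ)/(q_i^0 − q_j^ℓ), where q_j^ℓ = q_j^0 − γ. -/

import Mathlib

/-!
With `D^α = diag(q^α)`, each one-site operator is a Cauchy-type matrix and satisfies
`L^α D^{α+1} - D^α L^α = e u^{α+1}`, a rank-one matrix. Telescoping this along the product
`L = L^0 ⋯ L^{ℓ-1}` in the noncommutative matrix ring gives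
`L D^ℓ - D^0 L = Σ_ρ a^ρ c^ρ`, whose `(i, j)` entry is the formula. On `U` the difference
`q_i^0 - q_j^ℓ` never vanishes (for `i = j` it equals `γ`), so one may divide by it.
-/

open Real Finset Matrix Kronecker

namespace SpinRS

/-- Phase space: `q`-coordinates and `p`-coordinates indexed by (particle, node). -/
abbrev M (N : ℕ) : Type := ((Fin N × ℕ) → ℝ) × ((Fin N × ℕ) → ℝ)

/-- Extended position coordinate `q_i^α`, satisfying `q_i^{α+ℓ} = q_i^α - γ`. -/
noncomputable def q (N ℓ : ℕ) (γ : ℝ) (i : Fin N) (α : ℤ) (x : M N) : ℝ :=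
  x.1 (i, (α % (ℓ : ℤ)).toNat) - γ * ((α / (ℓ : ℤ) : ℤ) : ℝ)

/-- Extended momentum coordinate `p_i^α`, satisfying `p_i^{α+ℓ} = p_i^α`. -/
def p (N ℓ : ℕ) (i : Fin N) (α : ℤ) (x : M N) : ℝ :=
  x.2 (i, (α % (ℓ : ℤ)).toNat)

/-- Partial derivative with respect to the coordinate `q_i^a`, `0 ≤ a < ℓ`. -/
noncomputable def pdq (N : ℕ) (i : Fin N) (a : ℕ) (f : M N → ℝ) (x : M N) : ℝ :=
  deriv (fun s : ℝ => f (Function.update x.1 (i, a) s, x.2)) (x.1 (i, a))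

/-- Partial derivative with respect to the coordinate `p_i^a`, `0 ≤ a < ℓ`. -/
noncomputable def pdp (N : ℕ) (i : Fin N) (a : ℕ) (f : M N → ℝ) (x : M N) : ℝ :=
  deriv (fun s : ℝ => f (x.1, Function.update x.2 (i, a) s)) (x.2 (i, a))

/-- The Poisson bracket `{f, g}`. -/
noncomputable def Pb (N ℓ : ℕ) (f g : M N → ℝ) (x : M N) : ℝ :=
  ∑ i : Fin N, ∑ a ∈ Finset.range ℓ,
    (pdq N i a f x * pdp N i a g x - pdp N i a f x * pdq N i a g x)

/-- The open set `U` where the extended coordinates are pairwise distinct. -/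
def U (N ℓ : ℕ) (γ : ℝ) : Set (M N) :=
  {x | ∀ (i j : Fin N) (α β : ℤ), 0 ≤ α → α ≤ ℓ → 0 ≤ β → β ≤ ℓ →
    (i, α) ≠ (j, β) → q N ℓ γ i α x ≠ q N ℓ γ j β x}

/-- The gauge polynomial `χ^α(z)`. -/
noncomputable def chi (N ℓ : ℕ) (γ : ℝ) (α : ℤ) (z : ℝ) (x : M N) : ℝ :=
  ∏ i : Fin N, (z - q N ℓ γ i α x)

/-- The γ-deformed monopole operator `u_i^{α,s}` (`s = 1` for `+`, `s = -1` for `-`). -/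
noncomputable def u (N ℓ : ℕ) (γ : ℝ) (s : ℤ) (i : Fin N) (α : ℤ) (x : M N) : ℝ :=
  Real.exp ((s : ℝ) * p N ℓ i α x) * chi N ℓ γ (α + s) (q N ℓ γ i α x) x /
    ∏ j ∈ Finset.univ.erase i, (q N ℓ γ i α x - q N ℓ γ j α x)

/-- Kronecker delta modulo `ℓ`. -/
def dmod (ℓ : ℕ) (α β : ℤ) : ℝ := if α % (ℓ : ℤ) = β % (ℓ : ℤ) then 1 else 0

/-- The Cartan matrix `κ^{αβ}` of the necklace quiver. -/
def kappa (ℓ : ℕ) (α β : ℤ) : ℝ :=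
  2 * dmod ℓ α β - dmod ℓ (α + 1) β - dmod ℓ α (β + 1)

/-- One-site `L`-operator `L^{α,s}` as a matrix-valued function. -/
noncomputable def Lmat (N ℓ : ℕ) (γ : ℝ) (s : ℤ) (α : ℤ) (x : M N) :
    Matrix (Fin N) (Fin N) ℝ :=
  Matrix.of fun i j => u N ℓ γ s j (α + 1) x / (q N ℓ γ j (α + 1) x - q N ℓ γ i α x)

/-- The ordered product `L^{α,s} L^{α+1,s} ⋯ L^{α+n-1,s}`. -/
noncomputable def prodL (N ℓ : ℕ) (γ : ℝ) (s : ℤ) (α : ℤ) (n : ℕ) (x : M N) :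
    Matrix (Fin N) (Fin N) ℝ :=
  ((List.range n).map (fun k => Lmat N ℓ γ s (α + (k : ℤ)) x)).prod

/-- The total `L`-operator `L = L^{0,+} L^{1,+} ⋯ L^{ℓ-1,+}`. -/
noncomputable def Ltot (N ℓ : ℕ) (γ : ℝ) (x : M N) : Matrix (Fin N) (Fin N) ℝ :=
  prodL N ℓ γ 1 0 ℓ x

/-- The Hamiltonians `H[n] = Tr(L^n)`. -/
noncomputable def Ham (N ℓ : ℕ) (γ : ℝ) (n : ℕ) (x : M N) : ℝ :=
  Matrix.trace (Ltot N ℓ γ x ^ n)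

/-- The matrix Poisson bracket `{A₁, B₂}` in `End(ℝ^N) ⊗ End(ℝ^N)`. -/
noncomputable def PbMat (N ℓ : ℕ) (A B : M N → Matrix (Fin N) (Fin N) ℝ) (x : M N) :
    Matrix (Fin N × Fin N) (Fin N × Fin N) ℝ :=
  Matrix.of fun ik jl => Pb N ℓ (fun y => A y ik.1 jl.1) (fun y => B y ik.2 jl.2) x

/-- Matrix unit `e_{ij}`. -/
noncomputable def Eu (N : ℕ) (i j : Fin N) : Matrix (Fin N) (Fin N) ℝ :=
  Matrix.single i j 1

/-- The matrix `r^α`. -/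
noncomputable def rmat (N ℓ : ℕ) (γ : ℝ) (α : ℤ) (x : M N) :
    Matrix (Fin N × Fin N) (Fin N × Fin N) ℝ :=
  ∑ i : Fin N, ∑ j ∈ Finset.univ.erase i,
    (1 / (q N ℓ γ i α x - q N ℓ γ j α x)) •
      ((Eu N i i - Eu N i j) ⊗ₖ (Eu N j j - Eu N j i))

/-- The matrix `r̄^α`. -/
noncomputable def rbar (N ℓ : ℕ) (γ : ℝ) (α : ℤ) (x : M N) :
    Matrix (Fin N × Fin N) (Fin N × Fin N) ℝ :=
  ∑ i : Fin N, ∑ j ∈ Finset.univ.erase i,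
    (1 / (q N ℓ γ i α x - q N ℓ γ j α x)) • ((Eu N i i - Eu N i j) ⊗ₖ Eu N j j)

/-- The matrix `r̲^α`. -/
noncomputable def runder (N ℓ : ℕ) (γ : ℝ) (α : ℤ) (x : M N) :
    Matrix (Fin N × Fin N) (Fin N × Fin N) ℝ :=
  ∑ i : Fin N, ∑ j ∈ Finset.univ.erase i,
    (1 / (q N ℓ γ i α x - q N ℓ γ j α x)) •
      (Eu N i j ⊗ₖ Eu N j i - Eu N i i ⊗ₖ Eu N j j)

/-- Swap of the two tensor factors of `End(ℝ^N) ⊗ End(ℝ^N)`. -/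
def swapT (N : ℕ) (R : Matrix (Fin N × Fin N) (Fin N × Fin N) ℝ) :
    Matrix (Fin N × Fin N) (Fin N × Fin N) ℝ :=
  Matrix.of fun ik jl => R (ik.2, ik.1) (jl.2, jl.1)

/-- The zero mode `E^α = Σ_i u_i^{α,+}`. -/
noncomputable def Egen (N ℓ : ℕ) (γ : ℝ) (α : ℤ) (x : M N) : ℝ :=
  ∑ i : Fin N, u N ℓ γ 1 i α x

/-- The zero mode `F^α = Σ_i u_i^{α,-}`. -/
noncomputable def Fgen (N ℓ : ℕ) (γ : ℝ) (α : ℤ) (x : M N) : ℝ :=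
  ∑ i : Fin N, u N ℓ γ (-1) i α x

/-- The Cartan zero mode `H^α = Σ_i (2q_i^α - q_i^{α+1} - q_i^{α-1})`. -/
noncomputable def Hcar (N ℓ : ℕ) (γ : ℝ) (α : ℤ) (x : M N) : ℝ :=
  ∑ i : Fin N, (2 * q N ℓ γ i α x - q N ℓ γ i (α + 1) x - q N ℓ γ i (α - 1) x)

/-- Generating series `e^α(z)`. -/
noncomputable def egens (N ℓ : ℕ) (γ : ℝ) (α : ℤ) (z : ℝ) (x : M N) : ℝ :=
  ∑ i : Fin N, u N ℓ γ 1 i α x / (z - q N ℓ γ i α x)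

/-- Generating series `f^α(z)`. -/
noncomputable def fgens (N ℓ : ℕ) (γ : ℝ) (α : ℤ) (z : ℝ) (x : M N) : ℝ :=
  ∑ i : Fin N, u N ℓ γ (-1) i α x / (z - q N ℓ γ i α x)

/-- Generating series `h^α(z) = χ^{α+1}(z) χ^{α-1}(z) / χ^α(z)²`. -/
noncomputable def hgens (N ℓ : ℕ) (γ : ℝ) (α : ℤ) (z : ℝ) (x : M N) : ℝ :=
  chi N ℓ γ (α + 1) z x * chi N ℓ γ (α - 1) z x / (chi N ℓ γ α z x) ^ 2

/-- `V^s_{α,β} = u^{α,s} L^{α,s} ⋯ L^{β-1,s} e`. -/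
noncomputable def Vgen (N ℓ : ℕ) (γ : ℝ) (s : ℤ) (α β : ℤ) (x : M N) : ℝ :=
  ∑ i : Fin N, ∑ j : Fin N, u N ℓ γ s i α x * prodL N ℓ γ s α (β - α).toNat x i j

/-- The loop algebra generators `J^{αβ}[n]`, for `α, β ∈ {1,…,ℓ}`, `n : ℤ`. -/
noncomputable def Jgen (N ℓ : ℕ) (γ : ℝ) (α β : ℤ) (n : ℤ) (x : M N) : ℝ :=
  if 0 < n then Vgen N ℓ γ 1 α (β + n * ℓ - 1) x
  else if n < 0 then Vgen N ℓ γ (-1) β (α + (-n) * ℓ - 1) x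
  else if β < α then Vgen N ℓ γ (-1) β (α - 1) x
  else if α < β then Vgen N ℓ γ 1 α (β - 1) x
  else ∑ i : Fin N, (q N ℓ γ i α x - q N ℓ γ i (α - 1) x)

/-- The spin variables `a_i^α = (L^{0,+} ⋯ L^{α-2,+} e)_i`, `α ∈ {1,…,ℓ}`. -/
noncomputable def aspin (N ℓ : ℕ) (γ : ℝ) (α : ℤ) (x : M N) (i : Fin N) : ℝ :=
  ∑ j : Fin N, prodL N ℓ γ 1 0 (α - 1).toNat x i j

/-- The spin variables `c_j^α = (u^{α,+} L^{α,+} ⋯ L^{ℓ-1,+})_j`, `α ∈ {1,…,ℓ}`. -/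
noncomputable def cspin (N ℓ : ℕ) (γ : ℝ) (α : ℤ) (x : M N) (j : Fin N) : ℝ :=
  ∑ i : Fin N, u N ℓ γ 1 i α x * prodL N ℓ γ 1 α ((ℓ : ℤ) - α).toNat x i j

end SpinRS

theorem List.prod_range_mul_sub_mul_prod_range {R : Type*} [Ring R] (A d : ℕ → R) (n : ℕ) :
    ((List.range n).map A).prod * d n - d 0 * ((List.range n).map A).prod =
      ∑ k ∈ Finset.range n, ((List.range k).map A).prod * (A k * d (k + 1) - d k * A k) *
        ((List.range (n - (k + 1))).map fun i => A (k + 1 + i)).prod := by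
  induction n with
  | zero => simp
  | succ n ih =>
    have hsplit : ∀ P : R, P * A n * d (n + 1) - d 0 * (P * A n) =
        P * (A n * d (n + 1) - d n * A n) + (P * d n - d 0 * P) * A n := fun P => by
      noncomm_ring
    rw [List.prod_range_succ, hsplit, ih, Finset.sum_range_succ, Finset.sum_mul, add_comm,
      Nat.sub_self, List.range_zero, List.map_nil, List.prod_nil, mul_one]
    congr 1
    refine Finset.sum_congr rfl fun k hk => ?_
    obtain ⟨m, rfl⟩ := Nat.exists_eq_add_of_lt (Finset.mem_range.mp hk)
    rw [show k + m + 1 + 1 - (k + 1) = m + 1 by omega, show k + m + 1 - (k + 1) = m by omega,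
      List.prod_range_succ, show k + 1 + m = k + m + 1 by omega, mul_assoc]

theorem Finset.sum_Icc_one_int_eq_sum_range {M : Type*} [AddCommMonoid M] (n : ℕ) (f : ℤ → M) :
    ∑ ρ ∈ Icc (1 : ℤ) n, f ρ = ∑ k ∈ range n, f (k + 1) :=
  Finset.sum_nbij' (fun ρ => (ρ - 1).toNat) (fun k => k + 1)
    (by intro ρ; simp; omega) (by intro k; simp)
    (by intro ρ; simp; omega) (by intro k _; simp)
    (by intro ρ hρ; rw [mem_Icc] at hρ; congr 1; omega)

namespace SpinRS

section

variable {N ℓ : ℕ} {γ : ℝ} {x : M N}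

theorem q_add_period (hℓ : ℓ ≠ 0) (i : Fin N) (α : ℤ) :
    q N ℓ γ i (α + ℓ) x = q N ℓ γ i α x - γ := by
  have hℓ' : (ℓ : ℤ) ≠ 0 := by exact_mod_cast hℓ
  rw [q, q, Int.add_emod_right, Int.add_ediv_of_dvd_right (dvd_refl _), Int.ediv_self hℓ']
  push_cast
  ring

theorem q_succ_ne_of_mem_U (hx : x ∈ U N ℓ γ) {α : ℤ} (h₀ : 0 ≤ α) (hα : α < ℓ) (i j : Fin N) :
    q N ℓ γ j (α + 1) x ≠ q N ℓ γ i α x :=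
  hx j i (α + 1) α (by omega) (by omega) h₀ hα.le (by simp)

theorem q_zero_sub_q_ne_zero (hx : x ∈ U N ℓ γ) (hℓ : ℓ ≠ 0) (hγ : γ ≠ 0) (i j : Fin N) :
    q N ℓ γ i 0 x - q N ℓ γ j ℓ x ≠ 0 := by
  rcases eq_or_ne i j with rfl | hij
  · have hperiod := q_add_period (γ := γ) (x := x) hℓ i 0
    rw [zero_add] at hperiod
    rwa [hperiod, sub_sub_cancel]
  · exact sub_ne_zero.mpr (hx i j 0 ℓ le_rfl (by omega) (by omega) le_rfl (by simp [hij]))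

theorem Lmat_mul_diagonal_sub_diagonal_mul_Lmat (s α : ℤ)
    (h : ∀ i j : Fin N, q N ℓ γ j (α + 1) x ≠ q N ℓ γ i α x) :
    Lmat N ℓ γ s α x * diagonal (fun j => q N ℓ γ j (α + 1) x)
        - diagonal (fun i => q N ℓ γ i α x) * Lmat N ℓ γ s α x
      = vecMulVec 1 (fun j => u N ℓ γ s j (α + 1) x) := by
  ext i j
  have hne := sub_ne_zero.mpr (h i j)
  simp only [Matrix.sub_apply, mul_diagonal, diagonal_mul, Lmat, of_apply, vecMulVec_apply,
    Pi.one_apply]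
  field_simp

-- The binder of `prodL` is an integer, so `List.range n` is coerced to `List ℤ` by the list monad.
theorem prodL_eq (s α : ℤ) (n : ℕ) :
    prodL N ℓ γ s α n x = ((List.range n).map fun k : ℕ => Lmat N ℓ γ s (α + k) x).prod := by
  simp only [prodL, List.bind_eq_flatMap, List.pure_def, ← List.map_eq_flatMap, List.map_map]
  rfl

theorem prodL_zero_eq (s : ℤ) (n : ℕ) :
    prodL N ℓ γ s 0 n x = ((List.range n).map fun k : ℕ => Lmat N ℓ γ s k x).prod := by
  simp_rw [prodL_eq, zero_add]

theorem prodL_natCast_add_one (s : ℤ) (k n : ℕ) :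
    prodL N ℓ γ s (k + 1) n x = ((List.range n).map fun i => Lmat N ℓ γ s ↑(k + 1 + i) x).prod := by
  simp_rw [prodL_eq]
  push_cast
  rfl

theorem aspin_eq_mulVec (ρ : ℤ) : aspin N ℓ γ ρ x = prodL N ℓ γ 1 0 (ρ - 1).toNat x *ᵥ 1 := by
  ext i
  simp [aspin, mulVec, dotProduct]

theorem cspin_eq_vecMul (ρ : ℤ) :
    cspin N ℓ γ ρ x = (fun i => u N ℓ γ 1 i ρ x) ᵥ* prodL N ℓ γ 1 ρ ((ℓ : ℤ) - ρ).toNat x :=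
  rfl

theorem Ltot_mul_diagonal_sub_diagonal_mul_Ltot (hx : x ∈ U N ℓ γ) :
    Ltot N ℓ γ x * diagonal (fun j => q N ℓ γ j ℓ x)
        - diagonal (fun i => q N ℓ γ i 0 x) * Ltot N ℓ γ x
      = ∑ ρ ∈ Icc (1 : ℤ) ℓ, vecMulVec (aspin N ℓ γ ρ x) (cspin N ℓ γ ρ x) := by
  have key := List.prod_range_mul_sub_mul_prod_range (fun k : ℕ => Lmat N ℓ γ 1 k x)
    (fun k : ℕ => diagonal fun j => q N ℓ γ j k x) ℓ
  rw [Nat.cast_zero] at key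
  rw [Ltot, prodL_zero_eq, key, Finset.sum_Icc_one_int_eq_sum_range]
  refine Finset.sum_congr rfl fun k hk => ?_
  have hk : k < ℓ := Finset.mem_range.mp hk
  rw [aspin_eq_mulVec, cspin_eq_vecMul, ← vecMulVec_mul, ← mul_vecMulVec, ← prodL_zero_eq,
    show ((k : ℤ) + 1 - 1).toNat = k by omega,
    show ((ℓ : ℤ) - (k + 1)).toNat = ℓ - (k + 1) by omega, prodL_natCast_add_one, ← Lmat_mul_diagonal_sub_diagonal_mul_Lmat 1 k
      (q_succ_ne_of_mem_U hx (Nat.cast_nonneg k) (by exact_mod_cast hk))]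
  push_cast
  rfl

end

theorem total_L_spin_formula_rational_general
    (N ℓ : ℕ) (hℓ : 3 ≤ ℓ) (γ : ℝ) (hγ : γ ≠ 0)
    (i j : Fin N) (x : M N) (hx : x ∈ U N ℓ γ) :
    (∑ ρ ∈ Finset.Icc (1 : ℤ) (ℓ : ℤ), aspin N ℓ γ ρ x i * cspin N ℓ γ ρ x j) =
      Ltot N ℓ γ x i j * (q N ℓ γ j ℓ x - q N ℓ γ i 0 x) ∧
    Ltot N ℓ γ x i j =
      -((∑ ρ ∈ Finset.Icc (1 : ℤ) (ℓ : ℤ), aspin N ℓ γ ρ x i * cspin N ℓ γ ρ x j) /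
        (q N ℓ γ i 0 x - q N ℓ γ j ℓ x)) := by
  have hspin : (∑ ρ ∈ Finset.Icc (1 : ℤ) (ℓ : ℤ), aspin N ℓ γ ρ x i * cspin N ℓ γ ρ x j) =
      Ltot N ℓ γ x i j * (q N ℓ γ j ℓ x - q N ℓ γ i 0 x) := by
    have hentry := congrFun (congrFun (Ltot_mul_diagonal_sub_diagonal_mul_Ltot hx) i) j
    simp only [Matrix.sub_apply, mul_diagonal, diagonal_mul, Matrix.sum_apply,
      vecMulVec_apply] at hentry
    rw [← hentry]
    ring
  have hden := q_zero_sub_q_ne_zero hx (by omega) hγ i j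
  refine ⟨hspin, ?_⟩
  rw [hspin, ← neg_sub (q N ℓ γ i 0 x), mul_neg, neg_div, neg_neg, mul_div_cancel_right₀ _ hden]

/-- the total L-operator in terms of the spin variables. -/
theorem total_L_spin_formula_rational
    (N ℓ : ℕ) (hN : 1 ≤ N) (hℓ : 3 ≤ ℓ) (γ : ℝ) (hγ : γ ≠ 0)
    (i j : Fin N) (x : M N) (hx : x ∈ U N ℓ γ) :
    (∑ ρ ∈ Finset.Icc (1 : ℤ) (ℓ : ℤ), aspin N ℓ γ ρ x i * cspin N ℓ γ ρ x j) =
      Ltot N ℓ γ x i j * (q N ℓ γ j ℓ x - q N ℓ γ i 0 x) ∧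
    Ltot N ℓ γ x i j =
      -((∑ ρ ∈ Finset.Icc (1 : ℤ) (ℓ : ℤ), aspin N ℓ γ ρ x i * cspin N ℓ γ ρ x j) /
        (q N ℓ γ i 0 x - q N ℓ γ j ℓ x)) :=
  total_L_spin_formula_rational_general N ℓ hℓ γ hγ i j x hx

end SpinRS
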